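/- For Hermitian matrices X_1,...,X_d and any ε ≥ 0, the quadratic ε-pseudospectrum is bounded: if λ ∈ QΛ_ε(X_1,...,X_d) then ‖λ‖² ≤ (ε + sqrt(Σ_j ‖X_j‖²))², where ‖X_j‖ is the operator norm. -/

import Mathlib

/-!
In the ℓ²-sum of `d` copies of `ℂⁿ`, the vector `(λ_j v)_j` has norm `‖λ‖` for a unit vector `v`,
its distance to `(X_j v)_j` is the quadratic error, and `‖(X_j v)_j‖² ≤ ∑_j ‖X_j‖²`; the bound is
the triangle inequality between these three vectors.
-/

open Matrix

noncomputable section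

/-- The quadratic-mean eigen-error `sqrt (∑ j ‖X_j v − λ_j v‖²)`. -/
def quadErr {n d : ℕ} (X : Fin d → Matrix (Fin n) (Fin n) ℂ) (lam : Fin d → ℝ)
    (v : EuclideanSpace ℂ (Fin n)) : ℝ :=
  Real.sqrt (∑ j, ‖Matrix.toEuclideanLin (X j) v - (lam j : ℂ) • v‖ ^ 2)

/-- `μ_λ^Q`, the infimum of the quadratic-mean eigen-error over unit vectors. -/
def muQ {n d : ℕ} (X : Fin d → Matrix (Fin n) (Fin n) ℂ) (lam : Fin d → ℝ) : ℝ :=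
  ⨅ v : {v : EuclideanSpace ℂ (Fin n) // ‖v‖ = 1}, quadErr X lam v

/-- The quadratic ε-pseudospectrum `QΛ_ε`. -/
def quadPseudospectrum {n d : ℕ} (X : Fin d → Matrix (Fin n) (Fin n) ℂ) (ε : ℝ) :
    Set (Fin d → ℝ) :=
  {lam | ∃ v : EuclideanSpace ℂ (Fin n), ‖v‖ = 1 ∧ quadErr X lam v ≤ ε}

/-- The block column matrix `M_λ` stacking the blocks `X_j − λ_j I`. -/
def Mlam {n d : ℕ} (X : Fin d → Matrix (Fin n) (Fin n) ℂ) (lam : Fin d → ℝ) :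
    Matrix (Fin d × Fin n) (Fin n) ℂ :=
  fun p k => (X p.1 - (lam p.1 : ℂ) • (1 : Matrix (Fin n) (Fin n) ℂ)) p.2 k

/-- `Q_λ = ∑_j (X_j − λ_j I)²`. -/
def Qlam {n d : ℕ} (X : Fin d → Matrix (Fin n) (Fin n) ℂ) (lam : Fin d → ℝ) :
    Matrix (Fin n) (Fin n) ℂ :=
  ∑ j, (X j - (lam j : ℂ) • (1 : Matrix (Fin n) (Fin n) ℂ)) ^ 2

/-- The smallest singular value of a rectangular matrix, as the square root of the
smallest eigenvalue of `MᴴM`. -/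
def sigmaMin {m : Type*} [Fintype m] {n : ℕ} (M : Matrix m (Fin n) ℂ) : ℝ :=
  Real.sqrt (⨅ i : Fin n, (Matrix.isHermitian_conjTranspose_mul_self M).eigenvalues i)

section
variable {ι 𝕜 E : Type*} [Fintype ι] [RCLike 𝕜] [NormedAddCommGroup E] [NormedSpace 𝕜 E]

theorem PiLp.norm_toLp_ofReal_smul (c : EuclideanSpace ℝ ι) (v : E) :
    ‖WithLp.toLp 2 (fun j => (c j : 𝕜) • v)‖ = ‖c‖ * ‖v‖ := by
  simp only [PiLp.norm_eq_of_L2, norm_smul, RCLike.norm_ofReal,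
    mul_pow, ← Finset.sum_mul, Real.norm_eq_abs, sq_abs]
  rw [Real.sqrt_mul (Finset.sum_nonneg fun _ _ => sq_nonneg _), Real.sqrt_sq (norm_nonneg v)]

theorem PiLp.norm_toLp_apply_le (T : ι → E →L[𝕜] E) (v : E) :
    ‖WithLp.toLp 2 (fun j => T j v)‖ ≤ Real.sqrt (∑ j, ‖T j‖ ^ 2) * ‖v‖ := by
  rw [PiLp.norm_eq_of_L2, ← Real.sqrt_sq (norm_nonneg v), ← Real.sqrt_mul
    (Finset.sum_nonneg fun _ _ => sq_nonneg _), Finset.sum_mul]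
  gcongr with j
  simpa only [mul_pow] using pow_le_pow_left₀ (norm_nonneg _) ((T j).le_opNorm v) 2

theorem norm_mul_le_sqrt_sum_sq_norm_sub_add (T : ι → E →L[𝕜] E) (c : EuclideanSpace ℝ ι)
    (v : E) :
    ‖c‖ * ‖v‖ ≤
      Real.sqrt (∑ j, ‖T j v - (c j : 𝕜) • v‖ ^ 2) + Real.sqrt (∑ j, ‖T j‖ ^ 2) * ‖v‖ := by
  set U : PiLp 2 (fun _ : ι => E) := WithLp.toLp 2 (fun j => T j v)
  set W : PiLp 2 (fun _ : ι => E) := WithLp.toLp 2 (fun j => (c j : 𝕜) • v)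
  calc ‖c‖ * ‖v‖ = ‖W‖ := (PiLp.norm_toLp_ofReal_smul c v).symm
    _ ≤ ‖U - W‖ + ‖U‖ := (norm_le_norm_add_norm_sub U W).trans_eq (add_comm _ _)
    _ = Real.sqrt (∑ j, ‖T j v - (c j : 𝕜) • v‖ ^ 2) + ‖U‖ := by rw [PiLp.norm_eq_of_L2]; rfl
    _ ≤ _ := by gcongr; exact PiLp.norm_toLp_apply_le T v
end

theorem quadPseudospectrum_bounded_general {n d : ℕ}
    (X : Fin d → Matrix (Fin n) (Fin n) ℂ)
    (ε : ℝ) (lam : EuclideanSpace ℝ (Fin d))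
    (hlam : ∃ v : EuclideanSpace ℂ (Fin n), ‖v‖ = 1 ∧ quadErr X lam v ≤ ε) :
    ‖lam‖ ^ 2 ≤
      (ε + Real.sqrt (∑ j, ‖Matrix.toEuclideanCLM (𝕜 := ℂ) (X j)‖ ^ 2)) ^ 2 := by
  obtain ⟨v, hv, hq⟩ := hlam
  have key :=
    norm_mul_le_sqrt_sum_sq_norm_sub_add (fun j => Matrix.toEuclideanCLM (𝕜 := ℂ) (X j)) lam v
  rw [hv, mul_one, mul_one] at key
  gcongr
  exact key.trans (by gcongr; exact hq)

theorem quadPseudospectrum_bounded {n d : ℕ} (hn : 0 < n)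
    (X : Fin d → Matrix (Fin n) (Fin n) ℂ) (hX : ∀ j, (X j).IsHermitian)
    (ε : ℝ) (hε : 0 ≤ ε) (lam : EuclideanSpace ℝ (Fin d))
    (hlam : ∃ v : EuclideanSpace ℂ (Fin n), ‖v‖ = 1 ∧ quadErr X lam v ≤ ε) :
    ‖lam‖ ^ 2 ≤
      (ε + Real.sqrt (∑ j, ‖Matrix.toEuclideanCLM (𝕜 := ℂ) (X j)‖ ^ 2)) ^ 2 :=
  quadPseudospectrum_bounded_general X ε lam hlam
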